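/- Let s_1, s_2 be coprime positive integers and define s_n = s_{n-1} + s_{n-2} for n ≥ 3. The set {s_n : n ≥ 1} is uniquely avoidable if s_1 < s_2 or at least one of s_1, s_2 is even; if s_1 > s_2 and both are odd, the set is not avoidable. -/

import Mathlib

/-- The graph `G S` on the positive integers with an edge between distinct
`x, y` whenever `x + y ∈ S`. -/
def G (S : Set ℕ+) : SimpleGraph ℕ+ where
  Adj x y := x ≠ y ∧ x + y ∈ S
  symm := by
    constructor
    intro x y h
    exact ⟨h.1.symm, by rw [add_comm]; exact h.2⟩
  loopless := by
    constructor
    intro x h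
    exact h.1 rfl

/-- The partition `{A, Aᶜ}` of `ℕ+` avoids `S`: no two distinct elements of
the same part sum to an element of `S`. -/
def Avoids (A S : Set ℕ+) : Prop :=
  (∀ x ∈ A, ∀ y ∈ A, x ≠ y → x + y ∉ S) ∧
  (∀ x ∈ Aᶜ, ∀ y ∈ Aᶜ, x ≠ y → x + y ∉ S)

/-- `S` is avoidable: some partition of `ℕ+` avoids it. -/
def Avoidable (S : Set ℕ+) : Prop := ∃ A, Avoids A S

/-- `S` is uniquely avoidable: exactly one partition of `ℕ+` avoids it. -/
def UniquelyAvoidable (S : Set ℕ+) : Prop :=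
  ∃ A, Avoids A S ∧ ∀ A', Avoids A' S → A' = A ∨ A' = Aᶜ

/-!
Write `a = s 1`, `b = s 2`, and join distinct `x, y` whenever `x + y = s n`. If `b < a` are both
odd, three vertices with pairwise sums `s 1`, `s 3`, `s 4` form an odd triangle.

Otherwise the graph is connected and bipartite. Every `x ≥ s 3` is joined to its reflection
`s (k + 1) - x < x`, where `s k ≤ x < s (k + 1)`; and `[1, a + b]` is connected because the
rotation `v ↦ v + b mod (a + b)` is realised by paths through the sums `a, b, a + b, a + 2 * b`
at every vertex but one. For the 2-colouring, when `a` is even colour `x ∈ [1, a + b)` by whether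
`x * b⁻¹ mod a` lies in the upper half `{0} ∪ (a / 2, a)`, symmetrically when `b` is even, and
give each `x ≥ s 3` the colour opposite to its reflection. When `a < b` are both odd, colour the
longer sequence `b - a, a, b, …` instead, whose first term is even.
-/

open SimpleGraph

lemma avoids_iff_adj {A S : Set ℕ+} :
    Avoids A S ↔ ∀ x y, (G S).Adj x y → (x ∈ A ↔ y ∉ A) := by
  constructor
  · rintro ⟨hA, hAc⟩ x y ⟨hxy, hS⟩
    exact ⟨fun hx hy => hA x hx y hy hxy hS, fun hy => by_contra fun hx => hAc x hx y hy hxy hS⟩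
  · intro h
    exact ⟨fun x hx y hy hxy hS => (h x y ⟨hxy, hS⟩).1 hx hy,
      fun x hx y hy hxy hS => hx ((h x y ⟨hxy, hS⟩).2 hy)⟩

lemma Avoids.eq_or_eq_compl {A A' S : Set ℕ+} (hS : (G S).Preconnected) (hA : Avoids A S)
    (hA' : Avoids A' S) : A' = A ∨ A' = Aᶜ := by
  rw [avoids_iff_adj] at hA hA'
  have key : ∀ x y, (G S).Reachable x y → ((x ∈ A' ↔ x ∈ A) ↔ (y ∈ A' ↔ y ∈ A)) := by
    rintro x y ⟨p⟩
    induction p with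
    | nil => rfl
    | cons h _ ih =>
      have := hA _ _ h
      have := hA' _ _ h
      tauto
  by_cases h1 : 1 ∈ A' ↔ 1 ∈ A
  · exact .inl (Set.ext fun x => (key x 1 (hS x 1)).2 h1)
  · refine .inr (Set.ext fun x => ?_)
    have := key x 1 (hS x 1)
    rw [Set.mem_compl_iff]
    tauto

lemma not_avoidable_of_triangle {S : Set ℕ+} {x y z : ℕ+} (hxy : (G S).Adj x y)
    (hyz : (G S).Adj y z) (hxz : (G S).Adj x z) : ¬Avoidable S := by
  rintro ⟨A, hA⟩
  rw [avoids_iff_adj] at hA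
  have := hA _ _ hxy
  have := hA _ _ hyz
  have := hA _ _ hxz
  tauto

lemma avoidable_of_coloring {S : Set ℕ+} (C : (G S).Coloring Bool) : Avoidable S := by
  refine ⟨{x | C x}, avoids_iff_adj.2 fun x y h => ?_⟩
  have := C.valid h
  change C x = true ↔ ¬C y = true
  revert this
  cases C x <;> cases C y <;> simp

def sumGraph (T : Set ℕ) : SimpleGraph ℕ where
  Adj x y := x ≠ y ∧ 0 < x ∧ 0 < y ∧ x + y ∈ T
  symm := ⟨fun _ _ ⟨h, hx, hy, hT⟩ => ⟨h.symm, hy, hx, by rwa [add_comm]⟩⟩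
  loopless := ⟨fun _ h => h.1 rfl⟩

lemma sumGraph_mono {T T' : Set ℕ} (h : T ⊆ T') : sumGraph T ≤ sumGraph T' :=
  fun _ _ ⟨hxy, hx, hy, hT⟩ => ⟨hxy, hx, hy, h hT⟩

namespace sumGraph

def toPNat' (S : Set ℕ+) : sumGraph ((↑) '' S) →g G S where
  toFun := Nat.toPNat'
  map_rel' := by
    rintro x y ⟨hxy, hx, hy, p, hp, hsum⟩
    refine ⟨fun h => hxy ?_, ?_⟩
    · simpa [Nat.toPNat'_coe, hx, hy] using congrArg PNat.val h
    · convert hp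
      apply PNat.coe_injective
      simp [Nat.toPNat'_coe, hx, hy, hsum]

def ofG (S : Set ℕ+) : G S →g sumGraph ((↑) '' S) where
  toFun := PNat.val
  map_rel' := by
    rintro x y ⟨hxy, hS⟩
    exact ⟨fun h => hxy (PNat.coe_injective h), x.pos, y.pos, _, hS, rfl⟩

end sumGraph

lemma G_preconnected_of_reachable_one {S : Set ℕ+}
    (h : ∀ x, 0 < x → (sumGraph ((↑) '' S)).Reachable x 1) : (G S).Preconnected := by
  intro x y
  have hx : (G S).Reachable (Nat.toPNat' x) (Nat.toPNat' 1) := (h x x.pos).map (sumGraph.toPNat' S)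
  have hy : (G S).Reachable (Nat.toPNat' y) (Nat.toPNat' 1) := (h y y.pos).map (sumGraph.toPNat' S)
  rw [PNat.coe_toPNat'] at hx hy
  exact hx.trans hy.symm

structure IsFibLike (t : ℕ → ℕ) : Prop where
  pos : ∀ n, 1 ≤ n → 0 < t n
  add : ∀ n, 1 ≤ n → t (n + 2) = t (n + 1) + t n

namespace IsFibLike

variable {t : ℕ → ℕ} (ht : IsFibLike t)
include ht

lemma add_pred {k : ℕ} (hk : 2 ≤ k) : t (k + 1) = t k + t (k - 1) := by
  obtain ⟨n, rfl⟩ : ∃ n, k = n + 2 := ⟨k - 2, by omega⟩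
  exact ht.add (n + 1) (by omega)

lemma strictMonoOn : StrictMonoOn t (Set.Ici 2) := by
  refine strictMonoOn_Ici_of_pred_lt fun m (hm : 2 < m) => ?_
  obtain ⟨n, rfl⟩ : ∃ n, m = n + 3 := ⟨m - 3, by omega⟩
  rw [Order.pred_eq_sub_one, show n + 3 - 1 = n + 2 by omega, ht.add (n + 1) le_add_self]
  exact Nat.lt_add_of_pos_right (ht.pos (n + 1) le_add_self)

lemma lt_iff_lt {m n : ℕ} (hm : 2 ≤ m) (hn : 2 ≤ n) : t m < t n ↔ m < n :=
  ht.strictMonoOn.lt_iff_lt hm hn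

lemma le_iff_le {m n : ℕ} (hm : 2 ≤ m) (hn : 2 ≤ n) : t m ≤ t n ↔ m ≤ n :=
  ht.strictMonoOn.le_iff_le hm hn

lemma exists_bracket {x : ℕ} (hx : t 3 ≤ x) : ∃ k, 3 ≤ k ∧ t k ≤ x ∧ x < t (k + 1) := by
  have hmono : StrictMono fun n => t (n + 3) := fun m n h =>
    (ht.lt_iff_lt (by omega) (by omega)).2 (by omega)
  have hex : ∃ n, x < t (n + 3) := ⟨x + 1, Nat.lt_of_succ_le (hmono.id_le (x + 1))⟩
  have hfind : Nat.find hex ≠ 0 := fun h => (Nat.find_spec hex).not_ge (by rwa [h])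
  refine ⟨Nat.find hex + 2, by omega, ?_, Nat.find_spec hex⟩
  simpa [show Nat.find hex + 2 = Nat.find hex - 1 + 3 by omega] using
    Nat.find_min hex (Nat.sub_one_lt hfind)

lemma bracket_unique {x k l : ℕ} (hk : 2 ≤ k) (hl : 2 ≤ l) (hkx : t k ≤ x) (hxk : x < t (k + 1))
    (hlx : t l ≤ x) (hxl : x < t (l + 1)) : k = l := by
  have := (ht.lt_iff_lt hk (by omega)).1 (hkx.trans_lt hxl)
  have := (ht.lt_iff_lt hl (by omega)).1 (hlx.trans_lt hxk)
  omega

lemma sub_lt_of_bracket {x k : ℕ} (hk : 3 ≤ k) (hkx : t k ≤ x) : t (k + 1) - x < x := by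
  have := ht.add_pred (k := k) (by omega)
  have := (ht.lt_iff_lt (m := k - 1) (n := k) (by omega) (by omega)).2 (by omega)
  omega

end IsFibLike

-- `x ≥ t 3` gets the colour opposite to its reflection `t (k + 1) - x`, where
-- `t k ≤ x < t (k + 1)`; the clause `y < x` only serves the termination proof.
open Classical in
noncomputable def extendColoring (t : ℕ → ℕ) (c₀ : ℕ → Bool) (x : ℕ) : Bool :=
  if x < t 3 then c₀ x
  else if h : ∃ y < x, ∃ k, 3 ≤ k ∧ t k ≤ x ∧ x < t (k + 1) ∧ x + y = t (k + 1) then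
    !extendColoring t c₀ h.choose
  else false
termination_by x
decreasing_by exact h.choose_spec.1

def IsBaseColoring (t : ℕ → ℕ) (c₀ : ℕ → Bool) : Prop :=
  ∀ m x y, 1 ≤ m → m ≤ 4 → 0 < x → x < y → y < t 3 → x + y = t m → c₀ x ≠ c₀ y

lemma extendColoring_of_lt {t : ℕ → ℕ} {c₀ : ℕ → Bool} {x : ℕ} (hx : x < t 3) :
    extendColoring t c₀ x = c₀ x := by
  rw [extendColoring, if_pos hx]

namespace IsFibLike

variable {t : ℕ → ℕ} (ht : IsFibLike t) {c₀ : ℕ → Bool}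
include ht

lemma extendColoring_of_bracket {x k : ℕ} (hk : 3 ≤ k) (hkx : t k ≤ x) (hxk : x < t (k + 1)) :
    extendColoring t c₀ x = !extendColoring t c₀ (t (k + 1) - x) := by
  have hx : ¬x < t 3 := not_lt.2 (((ht.le_iff_le (by omega) (by omega)).2 hk).trans hkx)
  have h : ∃ y < x, ∃ k, 3 ≤ k ∧ t k ≤ x ∧ x < t (k + 1) ∧ x + y = t (k + 1) :=
    ⟨t (k + 1) - x, ht.sub_lt_of_bracket hk hkx, k, hk, hkx, hxk, by omega⟩
  rw [extendColoring, if_neg hx, dif_pos h]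
  obtain ⟨-, l, hl, hlx, hxl, hsum⟩ := h.choose_spec
  obtain rfl := ht.bracket_unique (by omega) (by omega) hkx hxk hlx hxl
  rw [show h.choose = t (k + 1) - x by omega]

/-- Reflecting both ends of an edge through the bracket `t (k + 1)` turns a sum `t (k + 2)`
into the smaller sum `t (k - 1)`. -/
lemma extendColoring_ne (hc₀ : IsBaseColoring t c₀) {n x y : ℕ} (hn : 1 ≤ n) (hx : 0 < x)
    (hxy : x < y) (hsum : x + y = t n) : extendColoring t c₀ x ≠ extendColoring t c₀ y := by
  induction y using Nat.strong_induction_on generalizing x n with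
  | _ y ih =>
  have h3 : t 3 = t 2 + t 1 := ht.add 1 le_rfl
  have h4 : t 4 = t 3 + t 2 := ht.add 2 (by omega)
  have h5 : t 5 = t 4 + t 3 := ht.add 3 (by omega)
  have h2 := ht.pos 2 (by omega)
  by_cases hy : y < t 3
  · have hn4 : n ≤ 4 := by
      by_contra! h
      have := (ht.le_iff_le (m := 5) (n := n) (by omega) (by omega)).2 h
      omega
    rw [extendColoring_of_lt (by omega), extendColoring_of_lt hy]
    exact hc₀ n x y hn hn4 hx hxy hy hsum
  obtain ⟨k, hk, hky, hyk⟩ := ht.exists_bracket (not_lt.1 hy)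
  have hk1 : t (k + 1) = t k + t (k - 1) := ht.add_pred (by omega)
  have hk2 : t (k + 2) = t (k + 1) + t k := ht.add k (by omega)
  have hk3 : t (k + 3) = t (k + 2) + t (k + 1) := ht.add (k + 1) (by omega)
  have hn2 : 2 ≤ n := by
    by_contra! h
    obtain rfl : n = 1 := by omega
    have := (ht.le_iff_le (m := 3) (n := k) (by omega) (by omega)).2 hk
    omega
  have hkn : k < n := (ht.lt_iff_lt (by omega) hn2).1 (by omega)
  have hnk : n < k + 3 := (ht.lt_iff_lt hn2 (by omega)).1 (by omega)
  obtain rfl | rfl : n = k + 1 ∨ n = k + 2 := by omega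
  · rw [ht.extendColoring_of_bracket hk hky hyk, show t (k + 1) - y = x by omega]
    cases extendColoring t c₀ x <;> simp
  · have hkx : t k ≤ x := by omega
    have hk0 : t (k - 1) < t k := (ht.lt_iff_lt (by omega) (by omega)).2 (by omega)
    rw [ht.extendColoring_of_bracket hk hky hyk, ht.extendColoring_of_bracket hk hkx (by omega)]
    have := ih (t (k + 1) - x) (by omega) (x := t (k + 1) - y) (n := k - 1) (by omega)
      (by omega) (by omega) (by omega)
    simpa [eq_comm] using this

end IsFibLike

def halfColor (m g x : ℕ) : Bool := decide (g * x % m = 0 ∨ m / 2 < g * x % m)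

lemma halfColor_ne {m g x y : ℕ} (hm : 0 < m) (he : Even m) (hg : Nat.Coprime g m)
    (hsum : g * (x + y) % m ≤ 2) (hxy : x % m ≠ y % m ∨ g * (x + y) % m = 1) :
    halfColor m g x ≠ halfColor m g y := by
  have hr : g * x % m ≠ g * y % m ∨ g * (x + y) % m = 1 :=
    hxy.imp_left fun h h' => h (Nat.ModEq.cancel_left_of_coprime (by rwa [Nat.gcd_comm]) h')
  have hadd := Nat.add_mod_eq_ite (k := m) (m := g * x) (n := g * y)
  rw [← mul_add] at hadd
  have hx := Nat.mod_lt (g * x) hm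
  have hy := Nat.mod_lt (g * y) hm
  simp only [halfColor, ne_eq, decide_eq_decide]
  generalize g * x % m = r at *
  generalize g * y % m = r' at *
  generalize g * (x + y) % m = ρ at *
  obtain ⟨T, rfl⟩ := he
  split_ifs at hadd <;> omega

lemma mod_ne_mod_of_lt_of_lt_add {m x y : ℕ} (hxy : x < y) (hy : y < x + m) : x % m ≠ y % m :=
  fun h => absurd (Nat.le_of_dvd (by omega) ((Nat.modEq_iff_dvd' hxy.le).1 h)) (by omega)

namespace IsFibLike

variable {t : ℕ → ℕ} (ht : IsFibLike t)
include ht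

lemma exists_isBaseColoring_of_even_two (hcop : Nat.Coprime (t 1) (t 2)) (he : Even (t 2)) :
    ∃ c₀, IsBaseColoring t c₀ := by
  have h2 : 1 < t 2 := by have := ht.pos 2 (by omega); obtain ⟨T, hT⟩ := he; omega
  obtain ⟨g, -, hg⟩ := Nat.exists_mul_mod_eq_one_of_coprime hcop h2
  have hgc : Nat.Coprime g (t 2) :=
    Nat.coprime_of_mul_modEq_one (t 1) (by rw [mul_comm, Nat.ModEq, hg, Nat.mod_eq_of_lt h2])
  have hres (j : ℕ) : g * (t 1 + j * t 2) % t 2 = 1 := by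
    rw [show g * (t 1 + j * t 2) = t 1 * g + g * j * t 2 by ring, Nat.add_mul_mod_self_right, hg]
  have h3 : t 3 = t 2 + t 1 := ht.add 1 le_rfl
  have h4 : t 4 = t 3 + t 2 := ht.add 2 (by omega)
  refine ⟨halfColor (t 2) g, fun n x y hn hn4 hx hxy hy hsum => ?_⟩
  obtain h | ⟨j, hj⟩ : x + y = t 2 ∨ ∃ j, x + y = t 1 + j * t 2 := by
    interval_cases n
    exacts [.inr ⟨0, by simpa⟩, .inl hsum, .inr ⟨1, by omega⟩, .inr ⟨2, by omega⟩]
  · refine halfColor_ne (by omega) he hgc (by simp [h]) (.inl ?_)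
    exact mod_ne_mod_of_lt_of_lt_add hxy (by omega)
  · exact halfColor_ne (by omega) he hgc (by simp [hj, hres]) (.inr (by rw [hj, hres]))

lemma exists_isBaseColoring_of_even_one (hcop : Nat.Coprime (t 1) (t 2)) (he : Even (t 1)) :
    ∃ c₀, IsBaseColoring t c₀ := by
  have h1 : 1 < t 1 := by have := ht.pos 1 le_rfl; obtain ⟨T, hT⟩ := he; omega
  obtain ⟨g, -, hg⟩ := Nat.exists_mul_mod_eq_one_of_coprime hcop.symm h1
  have hgc : Nat.Coprime g (t 1) :=
    Nat.coprime_of_mul_modEq_one (t 2) (by rw [mul_comm, Nat.ModEq, hg, Nat.mod_eq_of_lt h1])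
  have hres (i j : ℕ) : g * (i * t 2 + j * t 1) % t 1 = i % t 1 := by
    rw [show g * (i * t 2 + j * t 1) = i * (t 2 * g) + g * j * t 1 by ring,
      Nat.add_mul_mod_self_right, Nat.mul_mod, hg, mul_one, Nat.mod_mod]
  have h3 : t 3 = t 2 + t 1 := ht.add 1 le_rfl
  have h4 : t 4 = t 3 + t 2 := ht.add 2 (by omega)
  refine ⟨halfColor (t 1) g, fun n x y hn hn4 hx hxy hy hsum => ?_⟩
  interval_cases n
  · refine halfColor_ne (by omega) he hgc (by simp [hsum]) (.inl ?_)
    exact mod_ne_mod_of_lt_of_lt_add hxy (by omega)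
  · have h : g * (x + y) % t 1 = 1 := by simpa [hsum, Nat.mod_eq_of_lt h1] using hres 1 0
    exact halfColor_ne (by omega) he hgc (by omega) (.inr h)
  · have h : g * (x + y) % t 1 = 1 := by
      simpa [hsum, h3, Nat.mod_eq_of_lt h1] using hres 1 1
    exact halfColor_ne (by omega) he hgc (by omega) (.inr h)
  · have h : g * (x + y) % t 1 = 2 % t 1 := by rw [hsum, h4, h3, ← hres 2 1]; ring_nf
    refine halfColor_ne (by omega) he hgc (h ▸ Nat.mod_le 2 _) (.inl ?_)
    exact mod_ne_mod_of_lt_of_lt_add hxy (by omega)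

end IsFibLike

def extendBack (t : ℕ → ℕ) (n : ℕ) : ℕ := if n = 1 then t 2 - t 1 else t (n - 1)

lemma image_subset_extendBack (t : ℕ → ℕ) : t '' Set.Ici 1 ⊆ extendBack t '' Set.Ici 1 := by
  rintro _ ⟨n, hn, rfl⟩
  exact ⟨n + 1, by simp, by simp [extendBack, show n ≠ 0 by simp at hn; omega]⟩

lemma IsFibLike.extendBack_isFibLike {t : ℕ → ℕ} (ht : IsFibLike t) (hlt : t 1 < t 2) :
    IsFibLike (extendBack t) where
  pos n hn := by
    unfold extendBack
    split_ifs
    · omega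
    · exact ht.pos _ (by omega)
  add n hn := by
    unfold extendBack
    obtain rfl | hn := eq_or_lt_of_le hn
    · simp
      omega
    · simp only [show n + 2 ≠ 1 by omega, show n + 1 ≠ 1 by omega, show n ≠ 1 by omega,
        if_false]
      exact ht.add_pred (by omega)

namespace IsFibLike

variable {t : ℕ → ℕ} (ht : IsFibLike t)
include ht

lemma nonempty_coloring_of_isBaseColoring {c₀ : ℕ → Bool} (hc₀ : IsBaseColoring t c₀) :
    Nonempty ((sumGraph (t '' Set.Ici 1)).Coloring Bool) := by
  refine ⟨.mk (extendColoring t c₀) fun {x y} ⟨hxy, hx, hy, n, hn, hsum⟩ => ?_⟩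
  rcases lt_or_gt_of_ne hxy with h | h
  · exact ht.extendColoring_ne hc₀ hn hx h hsum.symm
  · exact (ht.extendColoring_ne hc₀ hn hy h (by omega)).symm

lemma nonempty_coloring (hcop : Nat.Coprime (t 1) (t 2))
    (h : t 1 < t 2 ∨ Even (t 1) ∨ Even (t 2)) :
    Nonempty ((sumGraph (t '' Set.Ici 1)).Coloring Bool) := by
  by_cases he : Even (t 1) ∨ Even (t 2)
  · obtain ⟨c₀, hc₀⟩ := he.elim (ht.exists_isBaseColoring_of_even_one hcop)
      (ht.exists_isBaseColoring_of_even_two hcop)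
    exact ht.nonempty_coloring_of_isBaseColoring hc₀
  have hlt : t 1 < t 2 := by tauto
  simp only [not_or, Nat.not_even_iff_odd] at he
  have ht' := ht.extendBack_isFibLike hlt
  have hcop' : Nat.Coprime (extendBack t 1) (extendBack t 2) := by
    simpa [extendBack, Nat.coprime_sub_self_left hlt.le] using hcop.symm
  have he' : Even (extendBack t 1) := by simpa [extendBack] using Nat.Odd.sub_odd he.2 he.1
  obtain ⟨c₀, hc₀⟩ := ht'.exists_isBaseColoring_of_even_one hcop' he'
  obtain ⟨C⟩ := ht'.nonempty_coloring_of_isBaseColoring hc₀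
  exact ⟨C.comp (Hom.ofLE (sumGraph_mono (image_subset_extendBack t)))⟩

end IsFibLike

lemma SimpleGraph.reachable_iterate_succ {V : Type*} {G : SimpleGraph V} {f : V → V} {z : V}
    (h : ∀ k, f^[k] z ≠ z → G.Reachable (f^[k] z) (f (f^[k] z))) (k : ℕ) :
    G.Reachable (f z) (f^[k + 1] z) := by
  induction k with
  | zero => rfl
  | succ k ih =>
    rw [Function.iterate_succ_apply']
    by_cases hk : f^[k + 1] z = z
    · rw [hk]
    · exact ih.trans (h _ hk)

section Rotation

variable {a b : ℕ} {T : Set ℕ}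

lemma sumGraph_reachable_of_add {x y : ℕ} (hT : {a, b, a + b, a + 2 * b} ⊆ T) (hxy : x ≠ y)
    (hx : 0 < x) (hy : 0 < y) (h : x + y = a ∨ x + y = b ∨ x + y = a + b ∨ x + y = a + 2 * b) :
    (sumGraph T).Reachable x y :=
  Adj.reachable ⟨hxy, hx, hy, hT (by simpa using h)⟩

lemma reachable_add_right (hT : {a, b, a + b, a + 2 * b} ⊆ T) (hb : 0 < b) (hne : a ≠ b) {v : ℕ}
    (hv : 0 < v) (hva : v ≤ a) (h2v : 2 * v ≠ a) : (sumGraph T).Reachable v (v + b) := by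
  by_cases h : 2 * v = a + b
  · exact (sumGraph_reachable_of_add (y := a - v) hT (by omega) hv (by omega) (by omega)).trans
      (sumGraph_reachable_of_add hT (by omega) (by omega) (by omega) (by omega))
  · exact (sumGraph_reachable_of_add (y := a + b - v) hT (by omega) hv (by omega) (by omega)).trans
      (sumGraph_reachable_of_add hT (by omega) (by omega) (by omega) (by omega))

lemma reachable_sub_left (hT : {a, b, a + b, a + 2 * b} ⊆ T) (ha : 0 < a) {v : ℕ} (hav : a < v)
    (hv : v ≤ a + b) (h1 : 2 * v ≠ a + b) (h2 : 2 * v ≠ 2 * a + b) :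
    (sumGraph T).Reachable v (v - a) := by
  obtain rfl | hv := eq_or_lt_of_le hv
  · exact sumGraph_reachable_of_add hT (by omega) (by omega) (by omega) (by omega)
  · exact (sumGraph_reachable_of_add (y := a + b - v) hT (by omega) (by omega) (by omega)
      (by omega)).trans (sumGraph_reachable_of_add hT (by omega) (by omega) (by omega) (by omega))

def rotate (a b v : ℕ) : ℕ := if v ≤ a then v + b else v - a

lemma rotate_mod_add_one (hab : 0 < a + b) (r : ℕ) :
    rotate a b (r % (a + b) + 1) = (r + b) % (a + b) + 1 := by
  have hr := Nat.mod_lt r hab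
  rw [← Nat.mod_add_mod]
  generalize r % (a + b) = c at *
  unfold rotate
  split_ifs
  · rw [Nat.mod_eq_of_lt (by omega)]
    omega
  · rw [Nat.mod_eq_sub_mod (by omega), Nat.mod_eq_of_lt (by omega)]
    omega

lemma rotate_iterate (hab : 0 < a + b) {v : ℕ} (hv : 0 < v) (hvab : v ≤ a + b) (k : ℕ) :
    (rotate a b)^[k] v = (v - 1 + k * b) % (a + b) + 1 := by
  induction k with
  | zero => rw [Nat.mod_eq_of_lt (by omega)]; simp; omega
  | succ k ih => rw [Function.iterate_succ_apply', ih, rotate_mod_add_one hab]; ring_nf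

lemma exists_rotate_iterate_eq (hcop : Nat.Coprime a b) (ha : 0 < a) (hb : 0 < b) {z v : ℕ}
    (hz : 0 < z) (hzab : z ≤ a + b) (hv : 0 < v) (hvab : v ≤ a + b) :
    ∃ k, (rotate a b)^[k + 1] z = v := by
  obtain ⟨g, -, hg⟩ := Nat.exists_mul_mod_eq_one_of_coprime
    (Nat.coprime_add_self_right.2 hcop.symm) (show 1 < a + b by omega)
  have hbg : (b : ZMod (a + b)) * g = 1 := by
    exact_mod_cast (ZMod.natCast_eq_natCast_iff' _ 1 _).2 (by rw [hg, Nat.mod_eq_of_lt (by omega)])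
  have hab : (a : ZMod (a + b)) + b = 0 := by exact_mod_cast ZMod.natCast_self (a + b)
  refine ⟨g * (v + (a + b) - z) + (a + b) - 1, ?_⟩
  suffices h : (z - 1 + (g * (v + (a + b) - z) + (a + b)) * b) % (a + b) = (v - 1) % (a + b) by
    rw [rotate_iterate (by omega) hz hzab, Nat.sub_add_cancel (by omega), h,
      Nat.mod_eq_of_lt (by omega)]
    omega
  rw [← ZMod.natCast_eq_natCast_iff']
  push_cast [hz, hv, show z ≤ v + (a + b) by omega]
  linear_combination (↑v - ↑z) * hbg + (↑g * ↑b + ↑b) * hab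

/-- Along the cycle `v ↦ v + b mod (a + b)` on `[1, a + b]` every step is a path of length at
most two, except at one vertex `z` (half of whichever of `a`, `a + b`, `2 * a + b` is even); so
the whole cycle is connected through the iterates of `z`. -/
lemma reachable_of_le_add (hcop : Nat.Coprime a b) (ha : 0 < a) (hb : 0 < b) (hne : a ≠ b)
    (hT : {a, b, a + b, a + 2 * b} ⊆ T) {v w : ℕ} (hv : 0 < v) (hvab : v ≤ a + b) (hw : 0 < w)
    (hwab : w ≤ a + b) : (sumGraph T).Reachable v w := by
  have hodd : ¬(2 ∣ a ∧ 2 ∣ b) := fun h => by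
    simpa [hcop.gcd_eq_one] using Nat.dvd_gcd h.1 h.2
  obtain ⟨z, hz, hzab, hbad⟩ : ∃ z, 0 < z ∧ z ≤ a + b ∧
      ∀ u, 2 * u = a ∨ 2 * u = a + b ∨ 2 * u = 2 * a + b → u = z := by
    by_cases h2a : 2 ∣ a
    · exact ⟨a / 2, by omega, by omega, by omega⟩
    by_cases h2b : 2 ∣ b
    · exact ⟨a + b / 2, by omega, by omega, by omega⟩
    · exact ⟨(a + b) / 2, by omega, by omega, by omega⟩
  have hstep (u : ℕ) (hu : 0 < u) (huab : u ≤ a + b) (huz : u ≠ z) :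
      (sumGraph T).Reachable u (rotate a b u) := by
    unfold rotate
    split_ifs with hua
    · exact reachable_add_right hT hb hne hu hua fun h => huz (hbad u (.inl h))
    · exact reachable_sub_left hT ha (by omega) huab (fun h => huz (hbad u (.inr (.inl h))))
        fun h => huz (hbad u (.inr (.inr h)))
  have hcycle := reachable_iterate_succ (G := sumGraph T) (f := rotate a b) (z := z)
    fun k hk => hstep _ (by rw [rotate_iterate (by omega) hz hzab]; omega)
      (by rw [rotate_iterate (by omega) hz hzab]; exact Nat.mod_lt _ (by omega)) hk
  obtain ⟨i, rfl⟩ := exists_rotate_iterate_eq hcop ha hb hz hzab hv hvab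
  obtain ⟨j, rfl⟩ := exists_rotate_iterate_eq hcop ha hb hz hzab hw hwab
  exact (hcycle i).symm.trans (hcycle j)

end Rotation

lemma IsFibLike.reachable_one {t : ℕ → ℕ} (ht : IsFibLike t) (hcop : Nat.Coprime (t 1) (t 2))
    (hne : t 1 ≠ t 2) {x : ℕ} (hx : 0 < x) : (sumGraph (t '' Set.Ici 1)).Reachable x 1 := by
  induction x using Nat.strong_induction_on with
  | _ x ih =>
  have h3 : t 3 = t 1 + t 2 := (ht.add 1 le_rfl).trans (add_comm _ _)
  have h4 : t 4 = t 1 + 2 * t 2 := by have : t 4 = t 3 + t 2 := ht.add 2 (by omega); omega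
  by_cases hx3 : x ≤ t 3
  · refine reachable_of_le_add hcop (ht.pos 1 le_rfl) (ht.pos 2 (by omega)) hne ?_ hx (by omega)
      one_pos (by omega)
    rintro _ (rfl | rfl | rfl | rfl)
    exacts [⟨1, by simp, rfl⟩, ⟨2, by simp, rfl⟩, ⟨3, by simp, h3⟩, ⟨4, by simp, h4⟩]
  obtain ⟨k, hk, hkx, hxk⟩ := ht.exists_bracket (x := x) (by omega)
  have hlt := ht.sub_lt_of_bracket hk hkx
  have hadj : (sumGraph (t '' Set.Ici 1)).Adj x (t (k + 1) - x) :=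
    ⟨by omega, hx, by omega, k + 1, by simp, by omega⟩
  exact hadj.reachable.trans (ih _ hlt (by omega))

/-- The three vertices `(t 1 + t 2) / 2`, `(t 1 - t 2) / 2`, `(t 1 + 3 * t 2) / 2` have pairwise
sums `t 1`, `t 3` and `t 4`. -/
lemma IsFibLike.exists_triangle {t : ℕ → ℕ} (ht : IsFibLike t) (hlt : t 2 < t 1)
    (h1 : Odd (t 1)) (h2 : Odd (t 2)) : ∃ x y z, (sumGraph (t '' Set.Ici 1)).Adj x y ∧
      (sumGraph (t '' Set.Ici 1)).Adj y z ∧ (sumGraph (t '' Set.Ici 1)).Adj x z := by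
  obtain ⟨i, hi⟩ := h1
  obtain ⟨j, hj⟩ := h2
  have h3 : t 3 = t 2 + t 1 := ht.add 1 le_rfl
  have h4 : t 4 = t 3 + t 2 := ht.add 2 (by omega)
  exact ⟨i + j + 1, i - j, i + 3 * j + 2, ⟨by omega, by omega, by omega, 1, by simp, by omega⟩,
    ⟨by omega, by omega, by omega, 3, by simp, by omega⟩,
    ⟨by omega, by omega, by omega, 4, by simp, by omega⟩⟩

/-- For a generalized Fibonacci sequence with coprime `s 1, s 2` and
`s (n+1) = s n + s (n-1)`, the set `{s n : n ≥ 1}` is uniquely avoidable if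
`s 1 < s 2` or one of `s 1, s 2` is even, and not avoidable if `s 2 < s 1`
and both are odd. -/
theorem stmt19 (s : ℕ → ℕ+) (hcop : Nat.Coprime (s 1) (s 2))
    (hrec : ∀ n, 1 ≤ n → s (n + 2) = s (n + 1) + s n) :
    ((s 1 < s 2 ∨ Even ((s 1 : ℕ)) ∨ Even ((s 2 : ℕ))) →
       UniquelyAvoidable {m : ℕ+ | ∃ n, 1 ≤ n ∧ m = s n}) ∧
    ((s 2 < s 1 ∧ Odd ((s 1 : ℕ)) ∧ Odd ((s 2 : ℕ))) →
       ¬Avoidable {m : ℕ+ | ∃ n, 1 ≤ n ∧ m = s n}) := by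
  set S := {m : ℕ+ | ∃ n, 1 ≤ n ∧ m = s n}
  have ht : IsFibLike fun n => (s n : ℕ) :=
    ⟨fun n _ => (s n).pos, fun n hn => by simp [hrec n hn]⟩
  have hS : (fun n => (s n : ℕ)) '' Set.Ici 1 = (↑) '' S := by
    ext m
    simp [S, eq_comm]
  refine ⟨fun h => ?_, fun ⟨hlt, h1, h2⟩ => ?_⟩
  · rw [← PNat.coe_lt_coe] at h
    have hne : (s 1 : ℕ) ≠ s 2 := fun he => by
      rw [← he, Nat.coprime_self] at hcop
      simp [← he, hcop] at h
    obtain ⟨C⟩ := ht.nonempty_coloring hcop h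
    obtain ⟨A, hA⟩ := avoidable_of_coloring (C.comp (hS ▸ sumGraph.ofG S))
    have hconn : (G S).Preconnected := G_preconnected_of_reachable_one fun x hx => by
      simpa [hS] using ht.reachable_one hcop hne hx
    exact ⟨A, hA, fun A' hA' => hA.eq_or_eq_compl hconn hA'⟩
  · obtain ⟨x, y, z, hxy, hyz, hxz⟩ := ht.exists_triangle ((PNat.coe_lt_coe _ _).2 hlt) h1 h2
    rw [hS] at hxy hyz hxz
    exact not_avoidable_of_triangle ((sumGraph.toPNat' S).map_adj hxy)
      ((sumGraph.toPNat' S).map_adj hyz) ((sumGraph.toPNat' S).map_adj hxz)
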